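/- Let θ : ℝ^m → ℝ∪{+∞} be PWTD with polyhedral pieces dom θ = C_1 ∪ … ∪ C_s, locally Lipschitz relative to dom θ, let F : X → ℝ^m be parabolically semidifferentiable on an open set O ⊇ F^{-1}(dom θ), and set f := θ∘F. Fix x̄ ∈ dom f. If the MSQC holds for F(x) ∈ dom θ at x̄, then for every w ∈ T_{dom f}(x̄) the set dom f is parabolically derivable at x̄ for w; more precisely, ∅ ≠ T²_{dom f}(x̄,w) = {z ∈ X : F''(x̄;w,z) ∈ T²_{dom θ}(F(x̄), dF(x̄)(w))} = T^{i,2}_{dom f}(x̄,w). -/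

import Mathlib

open Filter Topology Metric Set Pointwise
open scoped RealInnerProductSpace Classical

noncomputable section

namespace Paper

variable {X : Type*} [NormedAddCommGroup X] [NormedSpace ℝ X]
variable {Y : Type*} [NormedAddCommGroup Y] [NormedSpace ℝ Y]

/-- The effective domain of an extended-real-valued function. -/
def edom (h : X → EReal) : Set X := {x | h x ≠ ⊤}

/-- A function with values in `ℝ ∪ {+∞}` is proper if it is nowhere `⊥` and
finite somewhere. -/
def Proper (h : X → EReal) : Prop := (∀ x, h x ≠ ⊥) ∧ ∃ x, h x ≠ ⊤

/-- The indicator function `δ_C` of a set `C`. -/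
def ind (C : Set X) : X → EReal := fun x => if x ∈ C then (0 : EReal) else ⊤

/-- The tangent cone `T_S(x)`. -/
def tcone (S : Set X) (x : X) : Set X :=
  {w | ∃ τ : ℕ → ℝ, (∀ k, 0 < τ k) ∧ Tendsto τ atTop (𝓝 0) ∧
    Tendsto (fun k => infDist (x + τ k • w) S / τ k) atTop (𝓝 0)}

/-- The inner tangent cone `T^i_S(x)`. -/
def itcone (S : Set X) (x : X) : Set X :=
  {w | Tendsto (fun τ : ℝ => infDist (x + τ • w) S / τ) (𝓝[>] (0 : ℝ)) (𝓝 0)}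

/-- The second-order tangent set `T²_S(x,w)`. -/
def tcone2 (S : Set X) (x w : X) : Set X :=
  {z | ∃ τ : ℕ → ℝ, (∀ k, 0 < τ k) ∧ Tendsto τ atTop (𝓝 0) ∧
    Tendsto (fun k => infDist (x + τ k • w + ((τ k) ^ 2 / 2) • z) S / (τ k) ^ 2) atTop (𝓝 0)}

/-- The inner second-order tangent set `T^{i,2}_S(x,w)`. -/
def itcone2 (S : Set X) (x w : X) : Set X :=
  {z | Tendsto (fun τ : ℝ => infDist (x + τ • w + (τ ^ 2 / 2) • z) S / τ ^ 2)
    (𝓝[>] (0 : ℝ)) (𝓝 0)}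

/-- `S` is parabolically derivable at `x` for `w`. -/
def ParabolicallyDerivable (S : Set X) (x w : X) : Prop :=
  itcone2 S x w = tcone2 S x w ∧ (tcone2 S x w).Nonempty

/-- The subderivative `dh(x)(w)`. -/
def subderiv (h : X → EReal) (x w : X) : EReal :=
  liminf (fun p : ℝ × X => (h (x + p.1 • p.2) - h x) * (((p.1)⁻¹ : ℝ) : EReal))
    ((𝓝[>] (0 : ℝ)) ×ˢ 𝓝 w)

/-- The second-order difference quotient `Δ²_τ h(x)(w')` (without a vector `v`),
with the convention that it equals `⊤` whenever `h(x+τw')` and `dh(x)(w')` are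
simultaneously `+∞` or simultaneously `−∞`. -/
def quot2 (h : X → EReal) (x : X) (τ : ℝ) (w' : X) : EReal :=
  if (h (x + τ • w') = ⊤ ∧ subderiv h x w' = ⊤) ∨ (h (x + τ • w') = ⊥ ∧ subderiv h x w' = ⊥)
  then ⊤
  else (h (x + τ • w') - h x - (τ : EReal) * subderiv h x w') * (((2 / τ ^ 2) : ℝ) : EReal)

/-- The second subderivative `d²h(x)(w)` (without a vector `v`). -/
def subderiv2 (h : X → EReal) (x w : X) : EReal :=
  liminf (fun p : ℝ × X => quot2 h x p.1 p.2) ((𝓝[>] (0 : ℝ)) ×ˢ 𝓝 w)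

/-- The parabolic subderivative `d²h(x)(w|z)`. -/
def psubderiv (h : X → EReal) (x w z : X) : EReal :=
  liminf (fun p : ℝ × X =>
      (h (x + p.1 • w + (p.1 ^ 2 / 2) • p.2) - h x - (p.1 : EReal) * subderiv h x w)
        * (((2 / p.1 ^ 2) : ℝ) : EReal))
    ((𝓝[>] (0 : ℝ)) ×ˢ 𝓝 z)

/-- `h` is parabolically epi-differentiable at `x` for `w`. -/
def ParaEpiDiffAt (h : X → EReal) (x w : X) : Prop :=
  (∃ z, psubderiv h x w z ≠ ⊤) ∧
  ∀ z : X, ∀ τ : ℕ → ℝ, (∀ k, 0 < τ k) → Tendsto τ atTop (𝓝 (0 : ℝ)) →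
    ∃ zs : ℕ → X, Tendsto zs atTop (𝓝 z) ∧
      Tendsto (fun k =>
          (h (x + τ k • w + ((τ k) ^ 2 / 2) • zs k) - h x
              - ((τ k : ℝ) : EReal) * subderiv h x w)
            * (((2 / (τ k) ^ 2) : ℝ) : EReal))
        atTop (𝓝 (psubderiv h x w z))

/-- A polyhedral (convex) set: a finite intersection of closed half-spaces. -/
def IsPolyhedral (C : Set X) : Prop :=
  ∃ (k : ℕ) (a : Fin k → (X →L[ℝ] ℝ)) (b : Fin k → ℝ), C = {y | ∀ i, a i y ≤ b i}

/-- `g` is (Fréchet) twice differentiable on `U`. -/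
def TwiceDiffOn (g : X → Y) (U : Set X) : Prop :=
  (∀ y ∈ U, DifferentiableAt ℝ g y) ∧ ∀ y ∈ U, DifferentiableAt ℝ (fderiv ℝ g) y

/-- `ψ` is piecewise twice differentiable (PWTD) with pieces `Ω i` and twice
differentiable selections `sel i`. -/
structure IsPWTD (ψ : X → EReal) {s : ℕ} (Ω : Fin s → Set X) (sel : Fin s → X → ℝ) : Prop where
  dom_nonempty : (edom ψ).Nonempty
  dom_eq : edom ψ = ⋃ i, Ω i
  polyhedral : ∀ i, IsPolyhedral (Ω i)
  smooth : ∀ i, ∃ U : Set X, IsOpen U ∧ Ω i ⊆ U ∧ TwiceDiffOn (sel i) U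
  agrees : ∀ i, ∀ y ∈ Ω i, ψ y = ((sel i y : ℝ) : EReal)

/-- The active index set `J_y`. -/
def Jset {s : ℕ} (Ω : Fin s → Set X) (y : X) : Set (Fin s) := {i | y ∈ Ω i}

/-- The active index set `J_{y,w}`. -/
def Jset2 {s : ℕ} (Ω : Fin s → Set X) (y w : X) : Set (Fin s) :=
  {i | y ∈ Ω i ∧ w ∈ tcone (Ω i) y}

/-- `⟨w, ∇²g(y)w⟩`, the Hessian quadratic form of `g` at `y`. -/
def hess (g : X → ℝ) (y w : X) : ℝ := fderiv ℝ (fderiv ℝ g) y w w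

/-- `ψ` is locally Lipschitz (strictly continuous) relative to its domain. -/
def LipRelDom (ψ : X → EReal) : Prop :=
  ∀ y ∈ edom ψ, ∃ K ε : ℝ, 0 < ε ∧
    ∀ y₁ ∈ edom ψ ∩ ball y ε, ∀ y₂ ∈ edom ψ ∩ ball y ε,
      |(ψ y₁).toReal - (ψ y₂).toReal| ≤ K * ‖y₁ - y₂‖

/-- `g` has semiderivative `d` at `x` for `w`. -/
def HasSemideriv (g : X → Y) (x w : X) (d : Y) : Prop :=
  Tendsto (fun p : ℝ × X => (p.1)⁻¹ • (g (x + p.1 • p.2) - g x))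
    ((𝓝[>] (0 : ℝ)) ×ˢ 𝓝 w) (𝓝 d)

/-- `g` has parabolic semiderivative `d2` at `x` for `w` (with semiderivative `d`)
with respect to `z`. -/
def HasParaSemideriv (g : X → Y) (x w : X) (d : Y) (z : X) (d2 : Y) : Prop :=
  Tendsto (fun p : ℝ × X =>
      (2 / p.1 ^ 2) • (g (x + p.1 • w + (p.1 ^ 2 / 2) • p.2) - g x - p.1 • d))
    ((𝓝[>] (0 : ℝ)) ×ˢ 𝓝 z) (𝓝 d2)

/-- `g` is parabolically semidifferentiable at `x`. -/
def ParaSemidiffAt (g : X → Y) (x : X) : Prop :=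
  ∀ w, ∃ d, HasSemideriv g x w d ∧ ∀ z, ∃ d2, HasParaSemideriv g x w d z d2

/-- The metric subregularity qualification condition for the system `F(x) ∈ D` at `xb`. -/
def MSQC (F : X → Y) (D : Set Y) (xb : X) : Prop :=
  ∃ κ : ℝ, 0 < κ ∧ ∃ ε : ℝ, 0 < ε ∧
    ∀ x : X, ‖x - xb‖ ≤ ε → infDist x (F ⁻¹' D) ≤ κ * infDist (F x) D

/-- A piecewise linear function. -/
def IsPWL (g : X → EReal) : Prop :=
  ∃ (l : ℕ) (D : Fin l → Set X), edom g = ⋃ i, D i ∧ (∀ i, IsPolyhedral (D i)) ∧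
    ∀ i, ∃ (a : X →L[ℝ] ℝ) (c : ℝ), ∀ y ∈ D i, g y = ((a y + c : ℝ) : EReal)

/-- A piecewise linear-quadratic function. -/
def IsPWLQ (g : X → EReal) : Prop :=
  ∃ (l : ℕ) (D : Fin l → Set X), edom g = ⋃ i, D i ∧ (∀ i, IsPolyhedral (D i)) ∧
    ∀ i, ∃ (Q : X →L[ℝ] (X →L[ℝ] ℝ)) (a : X →L[ℝ] ℝ) (c : ℝ),
      ∀ y ∈ D i, g y = ((Q y y + a y + c : ℝ) : EReal)

/-- A function which is, piecewise on finitely many polyhedral sets covering its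
domain, a positively homogeneous continuous function. -/
def IsPiecewisePosHom (g : X → EReal) : Prop :=
  ∃ (l : ℕ) (D : Fin l → Set X), edom g = ⋃ i, D i ∧ (∀ i, IsPolyhedral (D i)) ∧
    ∀ i, ∃ hfun : X → ℝ, Continuous hfun ∧
      (∀ t : ℝ, 0 < t → ∀ x, hfun (t • x) = t * hfun x) ∧
      ∀ y ∈ D i, g y = ((hfun y : ℝ) : EReal)

/-- Convexity for extended-real-valued functions. -/
def ERealConvexOn (g : X → EReal) : Prop :=
  ∀ x y : X, ∀ t : ℝ, 0 ≤ t → t ≤ 1 →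
    g ((1 - t) • x + t • y) ≤ ((1 - t : ℝ) : EReal) * g x + ((t : ℝ) : EReal) * g y

section InnerSpace

variable {E : Type*} [NormedAddCommGroup E] [InnerProductSpace ℝ E]

/-- The second-order difference quotient `Δ²_τ h(x|v)(w')`. -/
def quot2v (h : E → EReal) (x v : E) (τ : ℝ) (w' : E) : EReal :=
  (h (x + τ • w') - h x - ((τ * ⟪v, w'⟫ : ℝ) : EReal)) * (((2 / τ ^ 2) : ℝ) : EReal)

/-- The second subderivative `d²h(x|v)(w)`. -/
def subderiv2v (h : E → EReal) (x v w : E) : EReal :=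
  liminf (fun p : ℝ × E => quot2v h x v p.1 p.2) ((𝓝[>] (0 : ℝ)) ×ˢ 𝓝 w)

/-- The regular (Fréchet) subdifferential `∂̂h(x)`. -/
def rsubdiff (h : E → EReal) (x : E) : Set E :=
  {v | (0 : EReal) ≤ liminf (fun x' =>
      (h x' - h x - ((⟪v, x' - x⟫ : ℝ) : EReal)) * ((‖x' - x‖⁻¹ : ℝ) : EReal)) (𝓝[≠] x)}

/-- The limiting (Mordukhovich) subdifferential `∂h(x)`. -/
def lsubdiff (h : E → EReal) (x : E) : Set E :=
  {v | ∃ xs vs : ℕ → E, Tendsto xs atTop (𝓝 x) ∧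
    Tendsto (fun k => h (xs k)) atTop (𝓝 (h x)) ∧
    (∀ k, vs k ∈ rsubdiff h (xs k)) ∧ Tendsto vs atTop (𝓝 v)}

/-- The critical cone `C_h(x,v)`. -/
def ccone (h : E → EReal) (x v : E) : Set E :=
  {w | subderiv h x w = ((⟪v, w⟫ : ℝ) : EReal)}

/-- `h` is twice epi-differentiable at `x` for `v`. -/
def TwiceEpiDiffAt (h : E → EReal) (x v : E) : Prop :=
  ∀ w : E, ∀ τ : ℕ → ℝ, (∀ k, 0 < τ k) → Tendsto τ atTop (𝓝 (0 : ℝ)) →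
    ∃ ws : ℕ → E, Tendsto ws atTop (𝓝 w) ∧
      Tendsto (fun k => quot2v h x v (τ k) (ws k)) atTop (𝓝 (subderiv2v h x v w))

/-- `h` is properly twice epi-differentiable at `x` for `v`. -/
def ProperTwiceEpiDiffAt (h : E → EReal) (x v : E) : Prop :=
  TwiceEpiDiffAt h x v ∧ (∀ w, subderiv2v h x v w ≠ ⊥) ∧ ∃ w, subderiv2v h x v w ≠ ⊤

/-- `h` is parabolically regular at `x` for `v`. -/
def ParaRegularAt (h : E → EReal) (x v : E) : Prop :=
  ∀ w : E, subderiv h x w = ((⟪v, w⟫ : ℝ) : EReal) →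
    (⨅ z : E, (psubderiv h x w z - ((⟪v, z⟫ : ℝ) : EReal))) = subderiv2v h x v w

/-- The regular normal cone `N̂_S(u)`. -/
def rncone (S : Set E) (u : E) : Set E :=
  {v | limsup (fun u' => ((⟪v, u' - u⟫ / ‖u' - u‖ : ℝ) : EReal)) (𝓝[S \ {u}] u) ≤ 0}

/-- The limiting normal cone `N_S(u)`. -/
def lncone (S : Set E) (u : E) : Set E :=
  {v | ∃ us vs : ℕ → E, (∀ k, us k ∈ S) ∧ Tendsto us atTop (𝓝 u) ∧
    (∀ k, vs k ∈ rncone S (us k)) ∧ Tendsto vs atTop (𝓝 v)}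

/-- `S` is Clarke regular at `u`. -/
def ClarkeRegularAt (S : Set E) (u : E) : Prop := rncone S u = lncone S u

/-- The epigraph of `h`, as a subset of the `ℓ²`-product `E ×₂ ℝ`. -/
def epi (h : E → EReal) : Set (WithLp 2 (E × ℝ)) :=
  {p | h (WithLp.equiv 2 (E × ℝ) p).1 ≤ (((WithLp.equiv 2 (E × ℝ) p).2 : ℝ) : EReal)}

/-- `h` is (Clarke) regular at `y`: its epigraph is Clarke regular at `(y, h(y))`. -/
def FunRegularAt (h : E → EReal) (y : E) : Prop :=
  ClarkeRegularAt (epi h) ((WithLp.equiv 2 (E × ℝ)).symm (y, (h y).toReal))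

/-- The Fenchel conjugate of an extended-real-valued function. -/
def conj (g : E → EReal) (zs : E) : EReal := ⨆ z : E, (((⟪zs, z⟫ : ℝ) : EReal) - g z)

/-- The set `A_h(y,w)` of subgradients attaining the subderivative. -/
def Aset (h : E → EReal) (y w : E) : Set E :=
  {ξ | ξ ∈ lsubdiff h y ∧ ((⟪ξ, w⟫ : ℝ) : EReal) = subderiv h y w}

end InnerSpace

end Paper

/-!
The pieces of `dom θ` are polyhedral. A sequence of points of `dom θ` approaching the arc
`y + t u + (t²/2) v` at the rate of a (second-order) tangent visits one piece infinitely often,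
and the finitely many linear inequalities describing that piece then force the whole arc into it
for small `t > 0`; so for `dom θ` first- and second-order tangents are inner ones. Tangents of
`dom f = F⁻¹(dom θ)` are pushed forward to tangents of `dom θ` by the (parabolic) semiderivatives
of `F`. Conversely, once the arc `F x̄ + t dF(x̄)w + (t²/2) F''(x̄;w,z)` lies in `dom θ`, the MSQC
bounds `dist(x̄ + t w + (t²/2) z, dom f)` by a multiple of the `o(t²)` remainder of the parabolic
expansion of `F`. With `z = 0` the same bound gives `dist(x̄ + t w, dom f) = O(t²)`, and
compactness of bounded sets in `X` extracts a second-order tangent.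
-/

namespace Paper

open Asymptotics

section RealInequalities

variable {α β γ : ℝ} {τ e : ℕ → ℝ}

theorem lex_nonpos_of_add_mul_le (hτ : ∀ n, 0 < τ n) (hτ0 : Tendsto τ atTop (𝓝 0))
    (he : Tendsto e atTop (𝓝 0)) (h : ∀ n, α + τ n * β ≤ τ n * e n) :
    α ≤ 0 ∧ (α = 0 → β ≤ 0) := by
  constructor
  · have hl : Tendsto (fun n => α + τ n * β) atTop (𝓝 (α + 0 * β)) :=
      tendsto_const_nhds.add (hτ0.mul_const β)
    simpa using le_of_tendsto_of_tendsto hl (by simpa using hτ0.mul he) (Eventually.of_forall h)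
  · rintro rfl
    refine ge_of_tendsto he (Eventually.of_forall fun n => ?_)
    exact le_of_mul_le_mul_left (by linarith [h n]) (hτ n)

theorem eventually_add_mul_nonpos (h : α ≤ 0 ∧ (α = 0 → β ≤ 0)) :
    ∀ᶠ t in 𝓝[>] (0 : ℝ), α + t * β ≤ 0 := by
  obtain hα | rfl := h.1.lt_or_eq
  · have hl : Tendsto (fun t : ℝ => α + t * β) (𝓝[>] 0) (𝓝 (α + 0 * β)) :=
      (tendsto_const_nhds.add (tendsto_id.mul_const β)).mono_left nhdsWithin_le_nhds
    exact (hl.eventually_lt_const (by simpa using hα)).mono fun t ht => ht.le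
  · filter_upwards [self_mem_nhdsWithin] with t (ht : 0 < t)
    nlinarith [h.2 rfl]

theorem eventually_add_mul_add_sq_mul_nonpos (hτ : ∀ n, 0 < τ n)
    (hτ0 : Tendsto τ atTop (𝓝 0)) (he : Tendsto e atTop (𝓝 0))
    (h : ∀ n, α + τ n * β + τ n ^ 2 / 2 * γ ≤ τ n ^ 2 * e n) :
    ∀ᶠ t in 𝓝[>] (0 : ℝ), α + t * β + t ^ 2 / 2 * γ ≤ 0 := by
  have hα : α ≤ 0 := (lex_nonpos_of_add_mul_le (α := α) (β := β)
    (e := fun n => τ n * (e n - γ / 2)) hτ hτ0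
    (by simpa using hτ0.mul (he.sub_const (γ / 2))) fun n => by nlinarith [h n]).1
  obtain hα | rfl := hα.lt_or_eq
  · have hl : Tendsto (fun t : ℝ => α + t * β + t ^ 2 / 2 * γ) (𝓝[>] 0) (𝓝 α) := by
      have : Continuous fun t : ℝ => α + t * β + t ^ 2 / 2 * γ := by fun_prop
      simpa using (this.tendsto 0).mono_left nhdsWithin_le_nhds
    exact (hl.eventually_lt_const hα).mono fun t ht => ht.le
  · -- dividing the hypothesis by `τ n` reduces the quadratic to a linear polynomial
    have hβγ := lex_nonpos_of_add_mul_le (α := β) (β := γ / 2) hτ hτ0 he fun n =>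
      le_of_mul_le_mul_left (by nlinarith [h n]) (hτ n)
    filter_upwards [eventually_add_mul_nonpos hβγ, self_mem_nhdsWithin] with t ht (ht0 : 0 < t)
    nlinarith

end RealInequalities

theorem exists_strictMono_forall_mem_of_mem_iUnion {α ι : Type*} [Finite ι] {C : ι → Set α}
    {q : ℕ → α} (h : ∀ n, q n ∈ ⋃ i, C i) :
    ∃ i, ∃ φ : ℕ → ℕ, StrictMono φ ∧ ∀ n, q (φ n) ∈ C i := by
  choose idx hidx using fun n => mem_iUnion.1 (h n)
  obtain ⟨i, hi⟩ := Finite.exists_infinite_fiber idx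
  obtain ⟨φ, hφ, hφi⟩ := extraction_of_frequently_atTop (P := fun n => idx n = i)
    (Nat.frequently_atTop_iff_infinite.2 (Set.infinite_coe_iff.1 hi))
  exact ⟨i, φ, hφ, fun n => hφi n ▸ hidx (φ n)⟩

section TangentSets

variable {X : Type*} [NormedAddCommGroup X] [NormedSpace ℝ X] {S : Set X} {x w z v : X}
  {q : ℕ → X} {r : ℕ → ℝ}

theorem tendsto_infDist_div_of_mem {v' : ℕ → X} (hr : ∀ n, 0 < r n)
    (hv' : Tendsto v' atTop (𝓝 v)) (hmem : ∀ n, q n + r n • v' n ∈ S) :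
    Tendsto (fun n => infDist (q n + r n • v) S / r n) atTop (𝓝 0) := by
  refine squeeze_zero (fun n => div_nonneg infDist_nonneg (hr n).le) (fun n => ?_)
    (tendsto_iff_dist_tendsto_zero.1 hv')
  rw [div_le_iff₀ (hr n), dist_eq_norm, mul_comm]
  calc infDist (q n + r n • v) S ≤ dist (q n + r n • v) (q n + r n • v' n) :=
        infDist_le_dist_of_mem (hmem n)
    _ = r n * ‖v' n - v‖ := by
        rw [dist_eq_norm, add_sub_add_left_eq_sub, ← smul_sub, norm_smul,
          Real.norm_of_nonneg (hr n).le, norm_sub_rev]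

theorem exists_tendsto_of_tendsto_infDist_div (hS : S.Nonempty) (hr : ∀ n, 0 < r n)
    (hr0 : Tendsto r atTop (𝓝 0))
    (h : Tendsto (fun n => infDist (q n + r n • v) S / r n) atTop (𝓝 0)) :
    ∃ v' : ℕ → X, Tendsto v' atTop (𝓝 v) ∧ ∀ n, q n + r n • v' n ∈ S := by
  choose p hpS hp using fun n =>
    (infDist_lt_iff hS).1 (lt_add_of_pos_right (infDist (q n + r n • v) S) (pow_pos (hr n) 2))
  refine ⟨fun n => (r n)⁻¹ • (p n - q n), ?_, fun n => ?_⟩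
  · rw [tendsto_iff_norm_sub_tendsto_zero]
    refine squeeze_zero (fun n => norm_nonneg _) (fun n => ?_) (by simpa using h.add hr0)
    have hrn := hr n
    calc ‖(r n)⁻¹ • (p n - q n) - v‖ = (r n)⁻¹ * dist (q n + r n • v) (p n) := by
          rw [dist_comm, dist_eq_norm, ← norm_smul_of_nonneg (inv_nonneg.2 hrn.le)]
          congr 1
          rw [smul_sub, smul_sub, smul_add, inv_smul_smul₀ hrn.ne']
          abel
      _ ≤ (r n)⁻¹ * (infDist (q n + r n • v) S + r n ^ 2) := by gcongr; exact (hp n).le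
      _ = infDist (q n + r n • v) S / r n + r n := by field_simp
  · rw [smul_inv_smul₀ (hr n).ne', add_sub_cancel]
    exact hpS n

theorem mem_tcone_of_tendsto {τ : ℕ → ℝ} {w' : ℕ → X} (hτ : ∀ n, 0 < τ n)
    (hτ0 : Tendsto τ atTop (𝓝 0)) (hw' : Tendsto w' atTop (𝓝 w))
    (hmem : ∀ n, x + τ n • w' n ∈ S) : w ∈ tcone S x :=
  ⟨τ, hτ, hτ0, tendsto_infDist_div_of_mem (q := fun _ => x) hτ hw' hmem⟩

theorem exists_tendsto_of_mem_tcone (hS : S.Nonempty) (hw : w ∈ tcone S x) :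
    ∃ τ : ℕ → ℝ, (∀ n, 0 < τ n) ∧ Tendsto τ atTop (𝓝 0) ∧
      ∃ w' : ℕ → X, Tendsto w' atTop (𝓝 w) ∧ ∀ n, x + τ n • w' n ∈ S := by
  obtain ⟨τ, hτ, hτ0, h⟩ := hw
  exact ⟨τ, hτ, hτ0, exists_tendsto_of_tendsto_infDist_div (q := fun _ => x) hS hτ hτ0 h⟩

theorem tendsto_infDist_div_sq_iff {τ : ℕ → ℝ} :
    Tendsto (fun n => infDist (x + τ n • w + (τ n ^ 2 / 2) • z) S / (τ n ^ 2 / 2)) atTop (𝓝 0) ↔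
      Tendsto (fun n => infDist (x + τ n • w + (τ n ^ 2 / 2) • z) S / τ n ^ 2) atTop (𝓝 0) := by
  have key : ∀ a b : ℝ, a / (b / 2) = 2 * (a / b) := fun a b => by field_simp
  simp only [key]
  constructor
  · intro h
    simpa using (h.const_mul (1 / 2)).congr fun n => by ring
  · intro h
    simpa using h.const_mul 2

theorem mem_tcone2_of_tendsto {τ : ℕ → ℝ} {z' : ℕ → X} (hτ : ∀ n, 0 < τ n)
    (hτ0 : Tendsto τ atTop (𝓝 0)) (hz' : Tendsto z' atTop (𝓝 z))
    (hmem : ∀ n, x + τ n • w + (τ n ^ 2 / 2) • z' n ∈ S) : z ∈ tcone2 S x w :=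
  ⟨τ, hτ, hτ0, tendsto_infDist_div_sq_iff.1 <|
    tendsto_infDist_div_of_mem (fun n => by have := hτ n; positivity) hz' hmem⟩

theorem exists_tendsto_of_mem_tcone2 (hS : S.Nonempty) (hz : z ∈ tcone2 S x w) :
    ∃ τ : ℕ → ℝ, (∀ n, 0 < τ n) ∧ Tendsto τ atTop (𝓝 0) ∧
      ∃ z' : ℕ → X, Tendsto z' atTop (𝓝 z) ∧ ∀ n, x + τ n • w + (τ n ^ 2 / 2) • z' n ∈ S := by
  obtain ⟨τ, hτ, hτ0, h⟩ := hz
  exact ⟨τ, hτ, hτ0, exists_tendsto_of_tendsto_infDist_div hS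
    (fun n => by have := hτ n; positivity) (by simpa using (hτ0.pow 2).div_const 2)
    (tendsto_infDist_div_sq_iff.2 h)⟩

theorem itcone2_subset_tcone2 : itcone2 S x w ⊆ tcone2 S x w := fun z hz =>
  ⟨fun n => 1 / ((n : ℝ) + 1), fun n => by positivity, tendsto_one_div_add_atTop_nhds_zero_nat,
    hz.comp (tendsto_nhdsWithin_iff.2 ⟨tendsto_one_div_add_atTop_nhds_zero_nat,
      Eventually.of_forall fun n => by simp only [mem_Ioi]; positivity⟩)⟩

theorem tcone2_nonempty_of_isBigO [ProperSpace X] (hS : S.Nonempty)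
    (h : (fun t : ℝ => infDist (x + t • w) S) =O[𝓝[>] 0] fun t => t ^ 2) :
    (tcone2 S x w).Nonempty := by
  obtain ⟨c, hc⟩ := h.bound
  set τ : ℕ → ℝ := fun n => 1 / ((n : ℝ) + 1)
  have hτ : ∀ n, 0 < τ n := fun n => by positivity
  have hτ0 : Tendsto τ atTop (𝓝 0) := tendsto_one_div_add_atTop_nhds_zero_nat
  choose p hpS hp using fun n =>
    (infDist_lt_iff hS).1 (lt_add_of_pos_right (infDist (x + τ n • w) S) (pow_pos (hτ n) 2))
  set z' : ℕ → X := fun n => (2 / τ n ^ 2) • (p n - (x + τ n • w))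
  have hz'S : ∀ n, x + τ n • w + (τ n ^ 2 / 2) • z' n ∈ S := fun n => by
    have hτn := (hτ n).ne'
    rw [smul_smul, show τ n ^ 2 / 2 * (2 / τ n ^ 2) = 1 by field_simp, one_smul,
      add_sub_cancel]
    exact hpS n
  have hbdd : ∀ᶠ n in atTop, z' n ∈ closedBall 0 (2 * (c + 1)) := by
    filter_upwards [(tendsto_nhdsWithin_iff.2 ⟨hτ0, Eventually.of_forall hτ⟩).eventually hc]
      with n hn
    have hτn := hτ n
    rw [Real.norm_of_nonneg infDist_nonneg, Real.norm_of_nonneg (by positivity)] at hn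
    rw [mem_closedBall_zero_iff, norm_smul, Real.norm_of_nonneg (by positivity), ← dist_eq_norm,
      dist_comm]
    calc 2 / τ n ^ 2 * dist (x + τ n • w) (p n) ≤ 2 / τ n ^ 2 * ((c + 1) * τ n ^ 2) := by
          gcongr; linarith [hp n]
      _ = 2 * (c + 1) := by field_simp
  obtain ⟨z, -, φ, hφ, hz⟩ := tendsto_subseq_of_frequently_bounded isBounded_closedBall
    hbdd.frequently
  exact ⟨z, mem_tcone2_of_tendsto (fun n => hτ (φ n)) (hτ0.comp hφ.tendsto_atTop) hz
    fun n => hz'S (φ n)⟩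

end TangentSets

section Polyhedral

variable {Y : Type*} [NormedAddCommGroup Y] [NormedSpace ℝ Y] {C D : Set Y} {y u z : Y}
  {τ : ℕ → ℝ}

theorem IsPolyhedral.eventually_add_smul_mem (hC : IsPolyhedral C) (hτ : ∀ n, 0 < τ n)
    (hτ0 : Tendsto τ atTop (𝓝 0)) {u' : ℕ → Y} (hu' : Tendsto u' atTop (𝓝 u))
    (hmem : ∀ n, y + τ n • u' n ∈ C) : ∀ᶠ t in 𝓝[>] (0 : ℝ), y + t • u ∈ C := by
  obtain ⟨k, a, b, rfl⟩ := hC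
  simp only [mem_ofPred_eq, map_add, map_smul, smul_eq_mul] at hmem ⊢
  refine eventually_all.2 fun j => ?_
  have he : Tendsto (fun n => a j u - a j (u' n)) atTop (𝓝 0) := by
    simpa using (tendsto_const_nhds (x := a j u)).sub (((a j).continuous.tendsto u).comp hu')
  have hlex := lex_nonpos_of_add_mul_le (α := a j y - b j) (β := a j u) hτ hτ0 he
    fun n => by nlinarith [hmem n j]
  filter_upwards [eventually_add_mul_nonpos hlex] with t ht
  linarith

theorem IsPolyhedral.eventually_add_smul_add_smul_mem (hC : IsPolyhedral C)
    (hτ : ∀ n, 0 < τ n) (hτ0 : Tendsto τ atTop (𝓝 0)) {z' : ℕ → Y}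
    (hz' : Tendsto z' atTop (𝓝 z)) (hmem : ∀ n, y + τ n • u + (τ n ^ 2 / 2) • z' n ∈ C) :
    ∀ᶠ t in 𝓝[>] (0 : ℝ), y + t • u + (t ^ 2 / 2) • z ∈ C := by
  obtain ⟨k, a, b, rfl⟩ := hC
  simp only [mem_ofPred_eq, map_add, map_smul, smul_eq_mul] at hmem ⊢
  refine eventually_all.2 fun j => ?_
  have he : Tendsto (fun n => (a j z - a j (z' n)) / 2) atTop (𝓝 0) := by
    simpa using ((tendsto_const_nhds (x := a j z)).sub
      (((a j).continuous.tendsto z).comp hz')).div_const 2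
  filter_upwards [eventually_add_mul_add_sq_mul_nonpos (α := a j y - b j) (β := a j u)
    (γ := a j z) hτ hτ0 he fun n => by nlinarith [hmem n j]] with t ht
  linarith

def IsPolyhedralUnion (D : Set Y) : Prop :=
  ∃ (s : ℕ) (C : Fin s → Set Y), (∀ i, IsPolyhedral (C i)) ∧ D = ⋃ i, C i

theorem IsPolyhedralUnion.eventually_add_smul_mem (hD : IsPolyhedralUnion D) (hne : D.Nonempty)
    (hu : u ∈ tcone D y) : ∀ᶠ t in 𝓝[>] (0 : ℝ), y + t • u ∈ D := by
  obtain ⟨s, C, hC, rfl⟩ := hD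
  obtain ⟨τ, hτ, hτ0, u', hu', hmem⟩ := exists_tendsto_of_mem_tcone hne hu
  obtain ⟨i, φ, hφ, hφi⟩ := exists_strictMono_forall_mem_of_mem_iUnion hmem
  exact ((hC i).eventually_add_smul_mem (fun n => hτ (φ n)) (hτ0.comp hφ.tendsto_atTop)
    (hu'.comp hφ.tendsto_atTop) hφi).mono fun t ht => mem_iUnion.2 ⟨i, ht⟩

theorem IsPolyhedralUnion.eventually_add_smul_add_smul_mem (hD : IsPolyhedralUnion D)
    (hne : D.Nonempty) (hz : z ∈ tcone2 D y u) :
    ∀ᶠ t in 𝓝[>] (0 : ℝ), y + t • u + (t ^ 2 / 2) • z ∈ D := by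
  obtain ⟨s, C, hC, rfl⟩ := hD
  obtain ⟨τ, hτ, hτ0, z', hz', hmem⟩ := exists_tendsto_of_mem_tcone2 hne hz
  obtain ⟨i, φ, hφ, hφi⟩ := exists_strictMono_forall_mem_of_mem_iUnion hmem
  exact ((hC i).eventually_add_smul_add_smul_mem (fun n => hτ (φ n))
    (hτ0.comp hφ.tendsto_atTop) (hz'.comp hφ.tendsto_atTop) hφi).mono
    fun t ht => mem_iUnion.2 ⟨i, ht⟩

end Polyhedral

section Semiderivatives

variable {X : Type*} [NormedAddCommGroup X] [NormedSpace ℝ X]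
  {Y : Type*} [NormedAddCommGroup Y] [NormedSpace ℝ Y]
  {F : X → Y} {S : Set X} {D : Set Y} {x w z : X} {d d2 : Y}

theorem tendsto_add_smul_add_smul (x w z : X) :
    Tendsto (fun t : ℝ => x + t • w + (t ^ 2 / 2) • z) (𝓝[>] 0) (𝓝 x) := by
  have : Continuous fun t : ℝ => x + t • w + (t ^ 2 / 2) • z := by fun_prop
  simpa using (this.tendsto 0).mono_left nhdsWithin_le_nhds

theorem HasSemideriv.mem_tcone (h : HasSemideriv F x w d) (hF : MapsTo F S D)
    (hS : S.Nonempty) (hw : w ∈ tcone S x) : d ∈ tcone D (F x) := by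
  obtain ⟨τ, hτ, hτ0, w', hw', hmem⟩ := exists_tendsto_of_mem_tcone hS hw
  refine mem_tcone_of_tendsto hτ hτ0
    (h.comp ((tendsto_nhdsWithin_iff.2 ⟨hτ0, Eventually.of_forall hτ⟩).prodMk hw'))
    fun n => ?_
  simp only [Function.comp_apply, smul_inv_smul₀ (hτ n).ne', add_sub_cancel]
  exact hF (hmem n)

theorem HasParaSemideriv.mem_tcone2 (h : HasParaSemideriv F x w d z d2) (hF : MapsTo F S D)
    (hS : S.Nonempty) (hz : z ∈ tcone2 S x w) : d2 ∈ tcone2 D (F x) d := by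
  obtain ⟨τ, hτ, hτ0, z', hz', hmem⟩ := exists_tendsto_of_mem_tcone2 hS hz
  refine mem_tcone2_of_tendsto hτ hτ0
    (h.comp ((tendsto_nhdsWithin_iff.2 ⟨hτ0, Eventually.of_forall hτ⟩).prodMk hz'))
    fun n => ?_
  have hτn := (hτ n).ne'
  convert hF (hmem n) using 1
  simp only [Function.comp_apply, smul_smul]
  rw [show τ n ^ 2 / 2 * (2 / τ n ^ 2) = 1 by field_simp, one_smul]
  abel

theorem HasParaSemideriv.isLittleO (h : HasParaSemideriv F x w d z d2) :
    (fun t : ℝ => F (x + t • w + (t ^ 2 / 2) • z) - (F x + t • d + (t ^ 2 / 2) • d2))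
      =o[𝓝[>] 0] fun t => t ^ 2 := by
  have hrem : (fun t : ℝ => (2 / t ^ 2) • (F (x + t • w + (t ^ 2 / 2) • z) - F x - t • d) - d2)
      =o[𝓝[>] 0] fun _ => (1 : ℝ) :=
    (isLittleO_one_iff ℝ).2 <| by
      simpa using (h.comp (tendsto_id.prodMk tendsto_const_nhds)).sub_const d2
  have hsq : (fun t : ℝ => t ^ 2 / 2) =O[𝓝[>] 0] fun t => t ^ 2 :=
    IsBigO.of_bound (1 / 2) (Eventually.of_forall fun t => by
      simp only [norm_div, Real.norm_ofNat]; linarith [norm_nonneg (t ^ 2)])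
  refine (hsq.smul_isLittleO hrem).congr' ?_ (Eventually.of_forall fun t => by simp)
  filter_upwards [self_mem_nhdsWithin] with t (ht : 0 < t)
  rw [smul_sub, smul_smul, show t ^ 2 / 2 * (2 / t ^ 2) = 1 by field_simp, one_smul]
  abel

theorem HasParaSemideriv.isBigO (h : HasParaSemideriv F x w d 0 d2) :
    (fun t : ℝ => F (x + t • w) - (F x + t • d)) =O[𝓝[>] 0] fun t => t ^ 2 := by
  have hquad : (fun t : ℝ => (t ^ 2 / 2) • d2) =O[𝓝[>] 0] fun t => t ^ 2 :=
    IsBigO.of_bound ‖d2‖ (Eventually.of_forall fun t => by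
      rw [norm_smul, norm_div, Real.norm_ofNat]; nlinarith [norm_nonneg (t ^ 2), norm_nonneg d2])
  refine (h.isLittleO.isBigO.add hquad).congr (fun t => ?_) fun _ => rfl
  simp only [smul_zero, add_zero]
  abel

end Semiderivatives

theorem MSQC.isBigO_infDist {X Y ι : Type*} [NormedAddCommGroup X] [NormedAddCommGroup Y]
    {F : X → Y} {D : Set Y} {x : X} {l : Filter ι}
    {c : ι → X} {p : ι → Y} (h : MSQC F D x) (hc : Tendsto c l (𝓝 x))
    (hp : ∀ᶠ i in l, p i ∈ D) :
    (fun i => infDist (c i) (F ⁻¹' D)) =O[l] fun i => F (c i) - p i := by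
  obtain ⟨κ, hκ, ε, hε, hsub⟩ := h
  refine IsBigO.of_bound κ ?_
  filter_upwards [hp, hc (closedBall_mem_nhds x hε)] with i hpi hci
  rw [Real.norm_of_nonneg infDist_nonneg, ← dist_eq_norm]
  exact (hsub _ (mem_closedBall_iff_norm.1 hci)).trans
    (mul_le_mul_of_nonneg_left (infDist_le_dist_of_mem hpi) hκ.le)

theorem statement3_general
    {X : Type*} [NormedAddCommGroup X] [InnerProductSpace ℝ X] [FiniteDimensional ℝ X]
    {m s : ℕ} (θ : EuclideanSpace ℝ (Fin m) → EReal)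
    (C : Fin s → Set (EuclideanSpace ℝ (Fin m)))
    (sel : Fin s → EuclideanSpace ℝ (Fin m) → ℝ)
    (hθ : IsPWTD θ C sel)
    (F : X → EuclideanSpace ℝ (Fin m))
    (xb : X) (hxb : θ (F xb) ≠ ⊤)
    (dF : X → EuclideanSpace ℝ (Fin m)) (Fpp : X → X → EuclideanSpace ℝ (Fin m))
    (hdF : ∀ w, HasSemideriv F xb w (dF w))
    (hFpp : ∀ w z, HasParaSemideriv F xb w (dF w) z (Fpp w z))
    (hMSQC : MSQC F (edom θ) xb) :
    ∀ w ∈ tcone (edom fun x => θ (F x)) xb,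
      ParabolicallyDerivable (edom fun x => θ (F x)) xb w ∧
      (tcone2 (edom fun x => θ (F x)) xb w).Nonempty ∧
      tcone2 (edom fun x => θ (F x)) xb w
        = {z : X | Fpp w z ∈ tcone2 (edom θ) (F xb) (dF w)} ∧
      tcone2 (edom fun x => θ (F x)) xb w = itcone2 (edom fun x => θ (F x)) xb w := by
  intro w hw
  set S := edom fun x => θ (F x)
  have hFS : MapsTo F S (edom θ) := fun _ hx => hx
  have hS : S.Nonempty := ⟨xb, hxb⟩
  have hD : IsPolyhedralUnion (edom θ) := ⟨s, C, hθ.polyhedral, hθ.dom_eq⟩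
  have hline : ∀ᶠ t in 𝓝[>] (0 : ℝ), F xb + t • dF w ∈ edom θ :=
    hD.eventually_add_smul_mem ⟨F xb, hxb⟩ ((hdF w).mem_tcone hFS hS hw)
  have hne : (tcone2 S xb w).Nonempty := by
    refine tcone2_nonempty_of_isBigO hS ((hMSQC.isBigO_infDist ?_ hline).trans (hFpp w 0).isBigO)
    simpa using tendsto_add_smul_add_smul xb w 0
  have hsub : tcone2 S xb w ⊆ {z | Fpp w z ∈ tcone2 (edom θ) (F xb) (dF w)} :=
    fun z hz => (hFpp w z).mem_tcone2 hFS hS hz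
  have hsup : {z | Fpp w z ∈ tcone2 (edom θ) (F xb) (dF w)} ⊆ itcone2 S xb w := fun z hz =>
    ((hMSQC.isBigO_infDist (tendsto_add_smul_add_smul xb w z)
      (hD.eventually_add_smul_add_smul_mem ⟨F xb, hxb⟩ hz)).trans_isLittleO
        (hFpp w z).isLittleO).tendsto_div_nhds_zero
  have hi : tcone2 S xb w = itcone2 S xb w :=
    (hsub.trans hsup).antisymm itcone2_subset_tcone2
  exact ⟨⟨hi.symm, hne⟩, hne, hsub.antisymm (hsup.trans itcone2_subset_tcone2), hi⟩

/-- Corollary 2.1 (parabolic derivability of the domain of `f = θ ∘ F`). -/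
theorem statement3
    {X : Type*} [NormedAddCommGroup X] [InnerProductSpace ℝ X] [FiniteDimensional ℝ X]
    {m s : ℕ} (θ : EuclideanSpace ℝ (Fin m) → EReal)
    (C : Fin s → Set (EuclideanSpace ℝ (Fin m)))
    (sel : Fin s → EuclideanSpace ℝ (Fin m) → ℝ)
    (hθ : IsPWTD θ C sel) (hlip : LipRelDom θ)
    (F : X → EuclideanSpace ℝ (Fin m))
    (hF : ∃ O : Set X, IsOpen O ∧ F ⁻¹' edom θ ⊆ O ∧ ∀ x ∈ O, ParaSemidiffAt F x)
    (xb : X) (hxb : θ (F xb) ≠ ⊤)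
    (dF : X → EuclideanSpace ℝ (Fin m)) (Fpp : X → X → EuclideanSpace ℝ (Fin m))
    (hdF : ∀ w, HasSemideriv F xb w (dF w))
    (hFpp : ∀ w z, HasParaSemideriv F xb w (dF w) z (Fpp w z))
    (hMSQC : MSQC F (edom θ) xb) :
    ∀ w ∈ tcone (edom fun x => θ (F x)) xb,
      ParabolicallyDerivable (edom fun x => θ (F x)) xb w ∧
      (tcone2 (edom fun x => θ (F x)) xb w).Nonempty ∧
      tcone2 (edom fun x => θ (F x)) xb w
        = {z : X | Fpp w z ∈ tcone2 (edom θ) (F xb) (dF w)} ∧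
      tcone2 (edom fun x => θ (F x)) xb w = itcone2 (edom fun x => θ (F x)) xb w :=
  statement3_general θ C sel hθ F xb hxb dF Fpp hdF hFpp hMSQC

end Paper
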